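/- For every real a ≥ 2, a·κ(a,1) = log 2 + (1/2)[a log a − (a−2) log(a−2)]. -/
import Mathlib


/-- The variational functional `f_{a,b}(δ,ε)` (with the convention `0 log 0 = 0`,
which holds automatically since `Real.log 0 = 0`). -/
noncomputable def fab (a b : ℝ) (p : ℝ × ℝ) : ℝ :=
  b * Real.log b - 2 * p.1 * Real.log p.1
    + ((a + 1 - b) / 2) * Real.log ((a + 1 - b) / 2)
    - ((a + 1 - b) / 2 - p.1) * Real.log ((a + 1 - b) / 2 - p.1)
    - 2 * p.2 * Real.log p.2
    - (b - p.1 - p.2) * Real.log (b - p.1 - p.2)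
    + ((a - 1 - b) / 2) * Real.log ((a - 1 - b) / 2)
    - ((a - 1 - b) / 2 - p.2) * Real.log ((a - 1 - b) / 2 - p.2)

/-- The domain `D_{a,b}` of `f_{a,b}`. -/
def Dab (a b : ℝ) : Set (ℝ × ℝ) :=
  {p | 0 ≤ p.1 ∧ 0 ≤ p.2 ∧ p.1 + p.2 ≤ b ∧ p.1 ≤ (a + 1 - b) / 2 ∧ p.2 ≤ (a - 1 - b) / 2}

/-- The entropy per step `κ(a,b) = (1/a) · sup_{(δ,ε) ∈ D_{a,b}} f_{a,b}(δ,ε)`. -/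
noncomputable def kappa (a b : ℝ) : ℝ := (1 / a) * sSup (fab a b '' Dab a b)

/-- For `a ≥ 2`, `a·κ(a,1) = log 2 + (1/2)[a log a − (a−2) log(a−2)]`. -/
lemma gibbs (x q : ℝ) (hx : 0 ≤ x) (hq : 0 < q) :
    x * Real.log q - x * Real.log x ≤ q - x := by
  rcases hx.eq_or_lt with h | h
  · simp [← h, hq.le]
  · have h1 : Real.log (q / x) ≤ q / x - 1 := Real.log_le_sub_one_of_pos (div_pos hq h)
    have h2 : Real.log (q / x) = Real.log q - Real.log x := Real.log_div hq.ne' h.ne'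
    rw [h2] at h1
    have h3 := mul_le_mul_of_nonneg_left h1 h.le
    calc x * Real.log q - x * Real.log x = x * (Real.log q - Real.log x) := by ring
      _ ≤ x * (q / x - 1) := h3
      _ = q - x := by field_simp

theorem stmt3 (a : ℝ) (ha : 2 ≤ a) :
    a * kappa a 1 = Real.log 2 + (1 / 2) * (a * Real.log a - (a - 2) * Real.log (a - 2)) := by
  have ha0 : a ≠ 0 := by intro h; rw [h] at ha; norm_num at ha
  suffices hS : sSup (fab a 1 '' Dab a 1)
      = Real.log 2 + (1 / 2) * (a * Real.log a - (a - 2) * Real.log (a - 2)) by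
    rw [kappa, hS]; field_simp
  rcases eq_or_lt_of_le ha with h2 | h2
  · -- a = 2
    subst h2
    have hval : fab 2 1 (1/2, 0) = Real.log 2 + (1 / 2) * (2 * Real.log 2 - (2 - 2) * Real.log (2 - 2)) := by
      simp only [fab]
      norm_num
      rw [show (1:ℝ)/2 = 2⁻¹ by norm_num, Real.log_inv]
      ring
    apply IsGreatest.csSup_eq
    constructor
    · exact ⟨(1/2, 0), by constructor <;> norm_num [Dab], hval⟩
    · rintro y ⟨p, hp, rfl⟩
      obtain ⟨hd, he, hs, hdu, heu⟩ := hp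
      have he0 : p.2 = 0 := le_antisymm (by norm_num at heu; linarith) he
      have g1 := gibbs p.1 (1/2) hd (by norm_num)
      have g2 := gibbs (1 - p.1) (1/2) (by norm_num at hs ⊢; linarith) (by norm_num)
      rw [show Real.log (1/2) = -Real.log 2 by rw [show (1:ℝ)/2 = 2⁻¹ by norm_num, Real.log_inv]] at g1 g2
      have hfab : fab 2 1 p = - (2 * p.1 * Real.log p.1) - 2 * ((1 - p.1) * Real.log (1 - p.1)) := by
        simp only [fab, he0]
        norm_num
        ring
      rw [hfab]
      linarith [g1, g2]
  · -- 2 < a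
    have ha1 : (0:ℝ) < a - 1 := by linarith
    have ha2 : (0:ℝ) < a - 2 := by linarith
    set L2 := Real.log 2 with hL2
    set La := Real.log a with hLa
    set Lm := Real.log (a - 1) with hLm
    set Ld := Real.log (a - 2) with hLd
    have e1 : Real.log ((a-1)/2) = Lm - L2 := Real.log_div ha1.ne' two_ne_zero
    have e2 : Real.log (1/(2*(a-1))) = -(L2 + Lm) := by
      rw [one_div, Real.log_inv, Real.log_mul two_ne_zero ha1.ne']
    have e3 : Real.log ((a-2)/(2*(a-1))) = Ld - (L2 + Lm) := by
      rw [Real.log_div ha2.ne' (by positivity), Real.log_mul two_ne_zero ha1.ne']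
    have e4 : Real.log ((a-2)^2/(2*(a-1))) = 2*Ld - (L2 + Lm) := by
      rw [Real.log_div (by positivity) (by positivity), Real.log_mul two_ne_zero ha1.ne',
        Real.log_pow]
      push_cast; ring
    have e5 : Real.log (a/2) = La - L2 := Real.log_div ha0 two_ne_zero
    have e6 : Real.log ((a-2)/2) = Ld - L2 := Real.log_div ha2.ne' two_ne_zero
    have e7 : Real.log (1/2 : ℝ) = -L2 := by
      rw [show (1:ℝ)/2 = 2⁻¹ by norm_num, Real.log_inv]
    -- the maximizer
    have hmem : ((1:ℝ)/2, (a-2)/(2*(a-1))) ∈ Dab a 1 := by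
      refine ⟨by norm_num, by positivity, ?_, ?_, ?_⟩
      · have : (a-2)/(2*(a-1)) ≤ 1/2 := by
          rw [div_le_div_iff₀ (by positivity) (by norm_num)]; nlinarith
        simp only []; linarith
      · simp only []; rw [le_div_iff₀ (by norm_num)]; linarith
      · simp only []; rw [div_le_div_iff₀ (by positivity) (by norm_num)]; nlinarith
    have hval : fab a 1 ((1:ℝ)/2, (a-2)/(2*(a-1)))
        = Real.log 2 + (1 / 2) * (a * Real.log a - (a - 2) * Real.log (a - 2)) := by
      simp only [fab]
      rw [show (a+1-1)/2 = a/2 by ring, show a/2 - 1/2 = (a-1)/2 by ring,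
        show (1:ℝ) - 1/2 - (a-2)/(2*(a-1)) = 1/(2*(a-1)) by field_simp; ring,
        show (a-1-1)/2 = (a-2)/2 by ring,
        show (a-2)/2 - (a-2)/(2*(a-1)) = (a-2)^2/(2*(a-1)) by field_simp; ring,
        Real.log_one, e1, e2, e3, e4, e5, e6, e7]
      field_simp
      ring
    apply IsGreatest.csSup_eq
    refine ⟨⟨_, hmem, hval⟩, ?_⟩
    rintro y ⟨p, hp, rfl⟩
    obtain ⟨hd, he, hs, hdu, heu⟩ := hp
    rw [show (a+1-1)/2 = a/2 by ring] at hdu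
    rw [show (a-1-1)/2 = (a-2)/2 by ring] at heu
    have g1 := gibbs p.1 (1/2) hd (by norm_num)
    have g2 := gibbs (a/2 - p.1) ((a-1)/2) (by linarith) (by positivity)
    have g3 := gibbs (1 - p.1 - p.2) (1/(2*(a-1))) (by linarith) (by positivity)
    have g4 := gibbs p.2 ((a-2)/(2*(a-1))) he (by positivity)
    have g5 := gibbs ((a-2)/2 - p.2) ((a-2)^2/(2*(a-1))) (by linarith) (by positivity)
    rw [e7] at g1
    rw [e1] at g2
    rw [e2] at g3
    rw [e3] at g4
    rw [e4] at g5
    have hqsum : 2*((1:ℝ)/2) + (a-1)/2 + 1/(2*(a-1)) + 2*((a-2)/(2*(a-1))) + (a-2)^2/(2*(a-1)) = a := by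
      field_simp; ring
    have hfab : fab a 1 p = - (2 * p.1 * Real.log p.1)
        + (a/2) * (La - L2)
        - (a/2 - p.1) * Real.log (a/2 - p.1)
        - 2 * p.2 * Real.log p.2
        - (1 - p.1 - p.2) * Real.log (1 - p.1 - p.2)
        + ((a-2)/2) * (Ld - L2)
        - ((a-2)/2 - p.2) * Real.log ((a-2)/2 - p.2) := by
      simp only [fab]
      rw [show (a+1-1)/2 = a/2 by ring, show (a-1-1)/2 = (a-2)/2 by ring,
        Real.log_one, e5, e6]
      ring
    rw [hfab]
    linarith [g1, g2, g3, g4, g5, hqsum]
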